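/- Let 1 < p < ∞ and let f : ℝ → ℝ be locally absolutely continuous with f, f' ∈ L^p(ℝ). Then sup over j ≥ 0 of 2^{j(1-1/p)}·(Σ_{ν ∈ ℤ} |2^j ∫ f h̃_{j,ν} dx|^p)^{1/p} ≤ C·‖f'‖_{L^p}, where C is a constant depending only on p. -/

import Mathlib

open MeasureTheory Real

/-- The Haar mother function `h = 𝟙_{[0,1/2)} - 𝟙_{[1/2,1)}`. -/
noncomputable def haar (x : ℝ) : ℝ :=
  if 0 ≤ x ∧ x < 1/2 then 1 else if 1/2 ≤ x ∧ x < 1 then -1 else 0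

/-!
With `T = 2^j` and `δ = 1/(2T)`, the coefficient `T ∫ f h(T x - ν/2) dx` is `T` times the
difference of the integrals of `f` over two adjacent intervals of length `δ`. Writing
`f x - f (x + δ)` as an integral of `f'` bounds it by `(1/2) ∫_{I_ν} |f'|`, where `I_ν` is their
union, of length `1/T`. Hölder's inequality on `I_ν` gives
`T^(p-1) |coefficient|^p ≤ 2^(-p) ∫_{I_ν} |f'|^p`, and since every point lies in exactly two of
the `I_ν`, summing over `ν` yields `T^(p-1) Σ_ν |coefficient|^p ≤ ‖f'‖_p^p`: the bound holds
with `C = 1`.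
-/

open Set

lemma MeasureTheory.LocallyIntegrable.intervalIntegrable {g : ℝ → ℝ} (hg : LocallyIntegrable g)
    (a b : ℝ) : IntervalIntegrable g volume a b :=
  (hg.integrableOn_isCompact isCompact_uIcc).intervalIntegrable

lemma mul_haar_mul_sub_eq_indicator {T : ℝ} (hT : 0 < T) (f : ℝ → ℝ) (c x : ℝ) :
    f x * haar (T * x - c) =
      (Ico (c / T) ((c + 1/2) / T)).indicator f x
        - (Ico ((c + 1/2) / T) ((c + 1) / T)).indicator f x := by
  simp only [haar, indicator, mem_Ico, div_le_iff₀ hT, lt_div_iff₀ hT]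
  split_ifs <;> grind

lemma integral_mul_haar_mul_sub {T : ℝ} (hT : 0 < T) {f : ℝ → ℝ} (hf : LocallyIntegrable f)
    (c : ℝ) :
    ∫ x, f x * haar (T * x - c) =
      (∫ x in c / T..(c + 1/2) / T, f x) - ∫ x in (c + 1/2) / T..(c + 1) / T, f x := by
  have hle : ∀ a b : ℝ, a ≤ b → a / T ≤ b / T := fun a b h => div_le_div_of_nonneg_right h hT.le
  have hIco : ∀ a b : ℝ, Integrable ((Ico a b).indicator f) := fun a b =>
    ((hf.integrableOn_isCompact isCompact_Icc).mono_set Ico_subset_Icc_self).integrable_indicator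
      measurableSet_Ico
  simp_rw [mul_haar_mul_sub_eq_indicator hT f c]
  rw [integral_sub (hIco _ _) (hIco _ _),
    integral_indicator measurableSet_Ico, integral_indicator measurableSet_Ico,
    setIntegral_congr_set Ico_ae_eq_Ioc, setIntegral_congr_set Ico_ae_eq_Ioc,
    intervalIntegral.integral_of_le (hle _ _ (by linarith)),
    intervalIntegral.integral_of_le (hle _ _ (by linarith))]

lemma sub_eq_intervalIntegral_of_forall_eq_add {f f' : ℝ → ℝ} (hf' : LocallyIntegrable f')
    (hf : ∀ x, f x = f 0 + ∫ t in (0:ℝ)..x, f' t) (x y : ℝ) :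
    f y - f x = ∫ t in x..y, f' t := by
  rw [hf y, hf x, add_sub_add_left_eq_sub, intervalIntegral.integral_interval_sub_left
    (hf'.intervalIntegrable 0 y) (hf'.intervalIntegrable 0 x)]

lemma continuous_of_forall_eq_add {f f' : ℝ → ℝ} (hf' : LocallyIntegrable f')
    (hf : ∀ x, f x = f 0 + ∫ t in (0:ℝ)..x, f' t) : Continuous f := by
  rw [funext hf]
  exact continuous_const.add (intervalIntegral.continuous_primitive hf'.intervalIntegrable 0)

lemma abs_intervalIntegral_sub_shift_le {f f' : ℝ → ℝ} (hf' : LocallyIntegrable f')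
    (hf : ∀ x, f x = f 0 + ∫ t in (0:ℝ)..x, f' t) {δ : ℝ} (hδ : 0 ≤ δ) (a : ℝ) :
    |(∫ x in a..a + δ, f x) - ∫ x in a + δ..a + 2 * δ, f x| ≤
      δ * ∫ t in a..a + 2 * δ, |f' t| := by
  have hfc := continuous_of_forall_eq_add hf' hf
  have hfδ : Continuous fun x => f (x + δ) := hfc.comp (continuous_add_const δ)
  have hshift : ∫ x in a + δ..a + 2 * δ, f x = ∫ x in a..a + δ, f (x + δ) := by
    rw [intervalIntegral.integral_comp_add_right]
    ring_nf
  rw [hshift, ← intervalIntegral.integral_sub (hfc.intervalIntegrable _ _)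
    (hfδ.intervalIntegrable _ _)]
  have hbound : ∀ x ∈ uIoc a (a + δ), ‖f x - f (x + δ)‖ ≤ ∫ t in a..a + 2 * δ, |f' t| := by
    intro x hx
    rw [uIoc_of_le (by linarith)] at hx
    rw [norm_eq_abs, abs_sub_comm, sub_eq_intervalIntegral_of_forall_eq_add hf' hf]
    calc |∫ t in x..x + δ, f' t| ≤ ∫ t in x..x + δ, |f' t| :=
          intervalIntegral.abs_integral_le_integral_abs (by linarith)
      _ ≤ ∫ t in a..a + 2 * δ, |f' t| :=
          intervalIntegral.integral_mono_interval hx.1.le (by linarith) (by linarith [hx.2])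
            (ae_of_all _ fun t => abs_nonneg (f' t)) (hf'.intervalIntegrable _ _).abs
  simpa [abs_of_nonneg hδ, mul_comm] using
    intervalIntegral.norm_integral_le_of_norm_le_const hbound

lemma rpow_integral_abs_le {α : Type*} [MeasurableSpace α] {μ : Measure α} [IsFiniteMeasure μ]
    {p : ℝ} (hp : 1 < p) {g : α → ℝ} (hg : MemLp g (ENNReal.ofReal p) μ) :
    (∫ x, |g x| ∂μ) ^ p ≤ μ.real univ ^ (p - 1) * ∫ x, |g x| ^ p ∂μ := by
  set q := p.conjExponent
  have hpq : p.HolderConjugate q := .conjExponent hp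
  have hHolder := integral_mul_le_Lp_mul_Lq_of_nonneg hpq (ae_of_all _ fun x => abs_nonneg (g x))
    (ae_of_all _ fun _ => zero_le_one) hg.abs (memLp_const 1)
  simp only [mul_one, one_rpow, integral_const, smul_eq_mul] at hHolder
  have hq : 1 / q * p = p - 1 := by
    rw [one_div, ← hpq.one_sub_inv, sub_mul, one_mul, inv_mul_cancel₀ (by linarith)]
  calc (∫ x, |g x| ∂μ) ^ p
      ≤ ((∫ x, |g x| ^ p ∂μ) ^ (1 / p) * μ.real univ ^ (1 / q)) ^ p :=
        rpow_le_rpow (integral_nonneg fun x => abs_nonneg _) hHolder (by linarith)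
    _ = μ.real univ ^ (p - 1) * ∫ x, |g x| ^ p ∂μ := by
        rw [mul_rpow (by positivity) (by positivity), ← rpow_mul (by positivity),
          ← rpow_mul (by positivity), one_div_mul_cancel (by linarith), rpow_one, hq, mul_comm]

lemma hasSum_intervalIntegral_double_cells {g : ℝ → ℝ} (hg : Integrable g) {δ : ℝ}
    (hδ : 0 < δ) :
    HasSum (fun ν : ℤ => ∫ x in ν * δ..ν * δ + 2 * δ, g x) (2 * ∫ x, g x) := by
  have hcells : HasSum (fun ν : ℤ => ∫ x in ν * δ..(ν + 1) * δ, g x) (∫ x, g x) := by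
    have h := hasSum_integral_iUnion (fun ν : ℤ => measurableSet_Ioc)
      (pairwise_disjoint_Ioc_add_zsmul 0 δ)
      (by rw [iUnion_Ioc_add_zsmul hδ]; exact hg.integrableOn)
    rw [iUnion_Ioc_add_zsmul hδ, Measure.restrict_univ] at h
    have hcell : ∀ ν : ℤ, ∫ x in ν * δ..(ν + 1) * δ, g x =
        ∫ x in Ioc (0 + ν • δ) (0 + (ν + 1) • δ), g x := fun ν => by
      rw [intervalIntegral.integral_of_le (by nlinarith)]
      simp [zsmul_eq_mul]
    simp_rw [hcell]
    exact h
  have hnext := (Equiv.addRight (1 : ℤ)).hasSum_iff.mpr hcells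
  convert hcells.add hnext using 1
  · ext ν
    simp only [Function.comp_apply, Equiv.coe_addRight, Int.cast_add, Int.cast_one]
    rw [intervalIntegral.integral_add_adjacent_intervals hg.intervalIntegrable
      hg.intervalIntegrable]
    ring_nf
  · ring

lemma rpow_abs_haar_coeff_le {p : ℝ} (hp : 1 < p) {f f' : ℝ → ℝ} (hf' : LocallyIntegrable f')
    (hf : ∀ x, f x = f 0 + ∫ t in (0:ℝ)..x, f' t) (hf'p : MemLp f' (ENNReal.ofReal p))
    {T : ℝ} (hT : 0 < T) (c : ℝ) :
    T ^ (p - 1) * |T * ∫ x, f x * haar (T * x - c)| ^ p ≤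
      2⁻¹ * ∫ x in c / T..(c + 1) / T, |f' x| ^ p := by
  set a := c / T
  set δ := (2 * T)⁻¹
  have hδ : 0 < δ := by positivity
  have hTδ : T * δ = 2⁻¹ := by simp only [δ]; field_simp
  have hmid : (c + 1/2) / T = a + δ := by simp only [a, δ]; field_simp
  have hend : (c + 1) / T = a + 2 * δ := by simp only [a, δ]; field_simp
  have hcoeff : |T * ∫ x, f x * haar (T * x - c)| ≤ 2⁻¹ * ∫ t in a..a + 2 * δ, |f' t| := by
    rw [integral_mul_haar_mul_sub hT (continuous_of_forall_eq_add hf' hf).locallyIntegrable c,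
      hmid, hend, abs_mul, abs_of_pos hT, ← hTδ, mul_assoc]
    exact mul_le_mul_of_nonneg_left (abs_intervalIntegral_sub_shift_le hf' hf hδ.le a) hT.le
  have hHolder : (∫ t in a..a + 2 * δ, |f' t|) ^ p ≤
      (2 * δ) ^ (p - 1) * ∫ t in a..a + 2 * δ, |f' t| ^ p := by
    have h := rpow_integral_abs_le (μ := volume.restrict (Ioc a (a + 2 * δ))) hp (hf'p.restrict _)
    rwa [measureReal_restrict_apply_univ, Real.volume_real_Ioc_of_le (by linarith),
      add_sub_cancel_left, ← intervalIntegral.integral_of_le (by linarith),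
      ← intervalIntegral.integral_of_le (by linarith)] at h
  have hM : 0 ≤ ∫ t in a..a + 2 * δ, |f' t| :=
    intervalIntegral.integral_nonneg (by linarith) fun t _ => abs_nonneg _
  rw [hend]
  calc T ^ (p - 1) * |T * ∫ x, f x * haar (T * x - c)| ^ p
      ≤ T ^ (p - 1) * (2⁻¹ * ∫ t in a..a + 2 * δ, |f' t|) ^ p := by
        gcongr
    _ = 2⁻¹ ^ p * (T ^ (p - 1) * (∫ t in a..a + 2 * δ, |f' t|) ^ p) := by
        rw [mul_rpow (by norm_num) hM]; ring
    _ ≤ 2⁻¹ ^ p * (T ^ (p - 1) * ((2 * δ) ^ (p - 1) * ∫ t in a..a + 2 * δ, |f' t| ^ p)) := by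
        gcongr
    _ = 2⁻¹ ^ p * ((T * (2 * δ)) ^ (p - 1) * ∫ t in a..a + 2 * δ, |f' t| ^ p) := by
        rw [mul_rpow hT.le (by positivity)]; ring
    _ = 2⁻¹ ^ p * ∫ t in a..a + 2 * δ, |f' t| ^ p := by
        rw [show T * (2 * δ) = 1 by linarith, one_rpow, one_mul]
    _ ≤ 2⁻¹ * ∫ t in a..a + 2 * δ, |f' t| ^ p := by
        gcongr
        · exact intervalIntegral.integral_nonneg (by linarith) fun t _ => by positivity
        · exact rpow_le_self_of_le_one (by norm_num) (by norm_num) hp.le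

/-- For `1 < p < ∞` and `f` locally absolutely continuous with `f, f' ∈ L^p`:
`sup_j 2^{j(1-1/p)} (Σ_ν |2^j ∫ f h̃_{j,ν}|^p)^{1/p} ≤ C ‖f'‖_p` with `C = C(p)`. -/
theorem shifted_haar_sup_bound (p : ℝ) (hp : 1 < p) :
    ∃ C : ℝ, 0 < C ∧
      ∀ (f f' : ℝ → ℝ),
        (∀ x : ℝ, f x = f 0 + ∫ t in (0:ℝ)..x, f' t) →
        LocallyIntegrable f' volume →
        MemLp f (ENNReal.ofReal p) volume →
        MemLp f' (ENNReal.ofReal p) volume →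
        ∀ j : ℕ,
          2 ^ ((j:ℝ) * (1 - 1/p)) *
              (∑' ν : ℤ, |2 ^ j * ∫ x : ℝ, f x * haar (2 ^ j * x - (ν : ℝ) / 2)| ^ p) ^ (1/p)
            ≤ C * (∫ x : ℝ, |f' x| ^ p) ^ (1/p) := by
  refine ⟨1, one_pos, fun f f' hf hf' _ hf'p j => ?_⟩
  set T : ℝ := 2 ^ j
  have hT : 0 < T := by positivity
  have hint : Integrable fun x => |f' x| ^ p := by
    simpa [norm_eq_abs, ENNReal.toReal_ofReal (by linarith : 0 ≤ p)] using
      hf'p.integrable_norm_rpow (by simp; linarith) (by simp)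
  have hcells : HasSum (fun ν : ℤ => 2⁻¹ * ∫ x in (ν / 2) / T..(ν / 2 + 1) / T, |f' x| ^ p)
      (∫ x, |f' x| ^ p) := by
    have h := (hasSum_intervalIntegral_double_cells hint (δ := (2 * T)⁻¹) (by positivity)).mul_left
      2⁻¹
    rw [inv_mul_cancel_left₀ two_ne_zero] at h
    have hends : ∀ ν : ℤ, (ν / 2) / T = ν * (2 * T)⁻¹ ∧
        (ν / 2 + 1) / T = ν * (2 * T)⁻¹ + 2 * (2 * T)⁻¹ := fun ν => by
      constructor <;> field_simp
    simp_rw [hends]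
    exact h
  set S := ∑' ν : ℤ, |T * ∫ x, f x * haar (T * x - (ν : ℝ) / 2)| ^ p
  have hsum : T ^ (p - 1) * S ≤ ∫ x, |f' x| ^ p := by
    have hbound := fun ν : ℤ => rpow_abs_haar_coeff_le hp hf' hf hf'p hT (ν / 2)
    rw [← tsum_mul_left]
    exact hasSum_le hbound (Summable.of_nonneg_of_le (fun _ => by positivity) hbound
      hcells.summable).hasSum hcells
  have hpow : T ^ ((p - 1) * (1 / p)) = 2 ^ ((j:ℝ) * (1 - 1/p)) := by
    rw [show T = 2 ^ (j:ℝ) from (rpow_natCast 2 j).symm, ← rpow_mul zero_le_two]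
    congr 1
    field_simp
  calc 2 ^ ((j:ℝ) * (1 - 1/p)) * S ^ (1/p) = (T ^ (p - 1) * S) ^ (1/p) := by
        rw [mul_rpow (by positivity) (tsum_nonneg fun _ => by positivity), ← rpow_mul hT.le, hpow]
    _ ≤ (∫ x, |f' x| ^ p) ^ (1/p) := rpow_le_rpow (by positivity) hsum (by positivity)
    _ = 1 * (∫ x, |f' x| ^ p) ^ (1/p) := (one_mul _).symm
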